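/- For integers g, n, i, s with g > n ≥ s > i ≥ 0, n ≥ 3 and g ≥ 2n + 3, the quantity b̃_{i,s} = (1/(g-n))·(-i^2(g - 2n + 3) + i(2g - 2sn + 6s - 3n + 3) + s((g-3)s + n - 3)) satisfies b̃_{i,s} ≥ 1. -/
import Mathlib

/-- The coefficient `b̃_{i:s}` of the boundary class `δ_{i:S}` in `[Σ^k(φ')]`
is at least `1` for `i < s`. -/
theorem btilde_ge_one (g n i s : ℤ) (hi : 0 ≤ i) (his : i < s) (hsn : s ≤ n)
    (hng : n < g) (hn : 3 ≤ n) (hg : 2 * n + 3 ≤ g) :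
    (1 : ℚ) ≤ (1 / ((g : ℚ) - (n : ℚ))) *
      (-(i : ℚ) ^ 2 * ((g : ℚ) - 2 * (n : ℚ) + 3)
        + (i : ℚ) * (2 * (g : ℚ) - 2 * (s : ℚ) * (n : ℚ) + 6 * (s : ℚ) - 3 * (n : ℚ) + 3)
        + (s : ℚ) * (((g : ℚ) - 3) * (s : ℚ) + (n : ℚ) - 3)) := by
  have hi' : (0:ℚ) ≤ (i:ℚ) := by exact_mod_cast hi
  have his' : (i:ℚ) + 1 ≤ (s:ℚ) := by exact_mod_cast his
  have hsn' : (s:ℚ) ≤ (n:ℚ) := by exact_mod_cast hsn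
  have hn' : (3:ℚ) ≤ (n:ℚ) := by exact_mod_cast hn
  have hg' : 2*(n:ℚ) + 3 ≤ (g:ℚ) := by exact_mod_cast hg
  have hs1 : (1:ℚ) ≤ (s:ℚ) := by linarith
  have hgn : (0:ℚ) < (g:ℚ) - (n:ℚ) := by
    have : (n:ℚ) < (g:ℚ) := by exact_mod_cast hng
    linarith
  rw [one_div_mul_eq_div, le_div_iff₀ hgn]
  nlinarith [mul_nonneg hi' (by linarith : (0:ℚ) ≤ (s:ℚ) - 1 - (i:ℚ)),
    mul_nonneg (mul_nonneg hi' (by linarith : (0:ℚ) ≤ (s:ℚ) - 1 - (i:ℚ))) (by linarith : (0:ℚ) ≤ (g:ℚ) - 2*(n:ℚ) + 3),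
    mul_nonneg (by linarith : (0:ℚ) ≤ (s:ℚ) - 1) (by linarith : (0:ℚ) ≤ (g:ℚ) - 3),
    mul_nonneg (mul_nonneg (by linarith : (0:ℚ) ≤ (s:ℚ) - 1) (by linarith : (0:ℚ) ≤ (s:ℚ) - 1)) (by linarith : (0:ℚ) ≤ (g:ℚ) - 2*(n:ℚ) - 3),
    mul_nonneg (by linarith : (0:ℚ) ≤ (s:ℚ) - 1) (by linarith : (0:ℚ) ≤ (n:ℚ) - 3),
    mul_nonneg hi' (by linarith : (0:ℚ) ≤ (g:ℚ) - 2*(n:ℚ) + 3),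
    mul_nonneg (mul_nonneg hi' (by linarith : (0:ℚ) ≤ (s:ℚ) - 1)) (by linarith : (0:ℚ) ≤ (n:ℚ) - 3),
    mul_nonneg (by linarith : (0:ℚ) ≤ (s:ℚ) - 1) (by linarith : (0:ℚ) ≤ (g:ℚ) - 2*(n:ℚ) - 3)]
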